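/- For every fair-chores instance with exactly 2 agents, there exists a connected allocation A = (A_1, A_2) that is simultaneously MMS (v_i(A_i) >= MMS_i for i = 1, 2) and PROP1, and that moreover satisfies EW(A) = OPT_E, UW(A) >= -1, and UW(A) >= 2 * OPT_U (note OPT_U <= 0). In particular, for two agents the price of MMS and of PROP1 with respect to egalitarian welfare is 1, and with respect to utilitarian welfare is at most 2. -/

import Mathlib

open Finset

noncomputable section

/-- The value of a bundle `S` of items under additive (item-level) valuation `v`. -/
def bundleVal {m : ℕ} (v : Fin m → ℝ) (S : Finset (Fin m)) : ℝ := ∑ e ∈ S, v e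

/-- A bundle is connected if it is an interval of the line `e_1, …, e_m`. -/
def IsConnBundle {m : ℕ} (S : Finset (Fin m)) : Prop :=
  ∀ a ∈ S, ∀ c ∈ S, ∀ b : Fin m, a ≤ b → b ≤ c → b ∈ S

/-- A connected allocation: pairwise disjoint connected bundles covering all items. -/
def ConnAlloc (n m : ℕ) (A : Fin n → Finset (Fin m)) : Prop :=
  (∀ i, IsConnBundle (A i)) ∧
  (∀ i j : Fin n, i ≠ j → Disjoint (A i) (A j)) ∧
  (∀ e : Fin m, ∃ i, e ∈ A i)

/-- The maximin share of an agent with valuation `v`: the maximum over connected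
`n`-partitions of the minimum bundle value. -/
def mmsVal (n m : ℕ) (v : Fin m → ℝ) : ℝ :=
  sSup { x : ℝ | ∃ A : Fin n → Finset (Fin m), ConnAlloc n m A ∧ x = ⨅ j, bundleVal v (A j) }

/-- Utilitarian welfare of an allocation. -/
def utilW (n m : ℕ) (v : Fin n → Fin m → ℝ) (A : Fin n → Finset (Fin m)) : ℝ :=
  ∑ i, bundleVal (v i) (A i)

/-- Egalitarian welfare of an allocation. -/
def egalW (n m : ℕ) (v : Fin n → Fin m → ℝ) (A : Fin n → Finset (Fin m)) : ℝ :=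
  ⨅ i, bundleVal (v i) (A i)

/-- Optimal utilitarian welfare over all connected allocations. -/
def optU (n m : ℕ) (v : Fin n → Fin m → ℝ) : ℝ :=
  sSup { x : ℝ | ∃ A, ConnAlloc n m A ∧ x = utilW n m v A }

/-- Optimal egalitarian welfare over all connected allocations. -/
def optE (n m : ℕ) (v : Fin n → Fin m → ℝ) : ℝ :=
  sSup { x : ℝ | ∃ A, ConnAlloc n m A ∧ x = egalW n m v A }

/-- A connected allocation of chores is PROP1 if every agent's bundle is either empty or
contains an item whose removal keeps the bundle connected and brings the agent's value
up to at least `-1/n`. -/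
def Prop1Chores (n m : ℕ) (v : Fin n → Fin m → ℝ) (A : Fin n → Finset (Fin m)) : Prop :=
  ∀ i, A i = ∅ ∨ ∃ e ∈ A i, IsConnBundle (A i \ {e}) ∧
    -(1 / (n : ℝ)) ≤ bundleVal (v i) (A i \ {e})

/-!
A connected allocation to two agents is a cut of the line: one agent takes a prefix, the other
the complementary suffix. Each agent's two bundles add up to `-1`, so exchanging the bundles of
an egalitarian-optimal cut shows that each bundle goes to the agent who dislikes it less, whence
`UW ≥ -1`; and one of the two ways of handing out the parts of a maximin partition has
egalitarian welfare at least its minimum, so an optimal allocation is MMS. Values are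
nonpositive, so `2 · OPT_U ≤ 2 · OPT_E ≤ UW`. For PROP1: if dropping the boundary item of an
agent's bundle still leaves it below `-1/2`, then the egalitarian optimum is below `-1/2` and
the partner values its side at least `-1 - OPT_E`, so the cut can be moved by one item without
losing optimality. Among the optimal cuts (for a fixed agent on the prefix) the last one passes
the suffix test, and the first cut that passes the suffix test also passes the prefix test.
-/

section Bundles

variable {m : ℕ}

lemma bundleVal_empty (w : Fin m → ℝ) : bundleVal w ∅ = 0 := sum_empty

lemma bundleVal_nonpos {w : Fin m → ℝ} (hw : ∀ e, w e ≤ 0) (S : Finset (Fin m)) :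
    bundleVal w S ≤ 0 :=
  sum_nonpos fun e _ => hw e

lemma bundleVal_le_of_subset {w : Fin m → ℝ} (hw : ∀ e, w e ≤ 0) {S T : Finset (Fin m)}
    (h : S ⊆ T) : bundleVal w T ≤ bundleVal w S := by
  rw [bundleVal, bundleVal, ← sum_sdiff h]
  linarith [sum_nonpos fun e (_ : e ∈ T \ S) => hw e]

def prefixItems (m k : ℕ) : Finset (Fin m) := {e | (e : ℕ) < k}

def suffixItems (m k : ℕ) : Finset (Fin m) := {e | k ≤ (e : ℕ)}

@[simp] lemma mem_prefixItems {k : ℕ} {e : Fin m} :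
    e ∈ prefixItems m k ↔ (e : ℕ) < k := by
  simp [prefixItems]

@[simp] lemma mem_suffixItems {k : ℕ} {e : Fin m} :
    e ∈ suffixItems m k ↔ k ≤ (e : ℕ) := by
  simp [suffixItems]

lemma isConnBundle_prefixItems (k : ℕ) : IsConnBundle (prefixItems m k) := by
  intro a _ c hc b _ hbc
  simp only [mem_prefixItems, Fin.le_def] at *
  omega

lemma isConnBundle_suffixItems (k : ℕ) : IsConnBundle (suffixItems m k) := by
  intro a ha c _ b hab _
  simp only [mem_suffixItems, Fin.le_def] at *
  omega

lemma prefixItems_zero : prefixItems m 0 = ∅ := by ext; simp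

lemma suffixItems_eq_empty {k : ℕ} (h : m ≤ k) : suffixItems m k = ∅ := by
  ext e; simp; omega

lemma prefixItems_subset {j k : ℕ} (h : j ≤ k) : prefixItems m j ⊆ prefixItems m k := by
  intro e; simp; omega

lemma suffixItems_subset {j k : ℕ} (h : j ≤ k) : suffixItems m k ⊆ suffixItems m j := by
  intro e; simp; omega

lemma prefixItems_sdiff_last {k : ℕ} (hk : 0 < k) (hkm : k ≤ m) :
    prefixItems m k \ {⟨k - 1, by omega⟩} = prefixItems m (k - 1) := by
  ext e; simp [Fin.ext_iff]; omega

lemma suffixItems_sdiff_first {k : ℕ} (hk : k < m) :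
    suffixItems m k \ {⟨k, hk⟩} = suffixItems m (k + 1) := by
  ext e; simp [Fin.ext_iff]; omega

lemma exists_eq_prefixItems {S : Finset (Fin m)} (hS : IsLowerSet (S : Set (Fin m))) :
    ∃ k ≤ m, S = prefixItems m k := by
  by_cases hc : Sᶜ.Nonempty
  · refine ⟨Sᶜ.min' hc, (Sᶜ.min' hc).isLt.le, ?_⟩
    ext e
    rw [mem_prefixItems, ← Fin.lt_def]
    constructor
    · intro he
      by_contra! hle
      exact mem_compl.1 (Sᶜ.min'_mem hc) (hS hle he)
    · intro hlt
      by_contra he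
      exact (Sᶜ.min'_le e (mem_compl.2 he)).not_gt hlt
  · refine ⟨m, le_rfl, ?_⟩
    rw [not_nonempty_iff_eq_empty, compl_eq_empty_iff] at hc
    ext e; simp [hc]

end Bundles

section Allocations

variable {n m : ℕ}

lemma ConnAlloc.comp_perm {A : Fin n → Finset (Fin m)} (hA : ConnAlloc n m A)
    (π : Equiv.Perm (Fin n)) : ConnAlloc n m (A ∘ π) := by
  obtain ⟨hconn, hdisj, hcover⟩ := hA
  refine ⟨fun i => hconn (π i), fun i j hij => hdisj _ _ (π.injective.ne hij), fun e => ?_⟩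
  obtain ⟨i, hi⟩ := hcover e
  exact ⟨π.symm i, by simpa using hi⟩

lemma egalW_le_bundleVal (v : Fin n → Fin m → ℝ) (A : Fin n → Finset (Fin m)) (i : Fin n) :
    egalW n m v A ≤ bundleVal (v i) (A i) :=
  ciInf_le (Finite.bddBelow_range _) i

lemma mul_egalW_le_utilW (v : Fin n → Fin m → ℝ) (A : Fin n → Finset (Fin m)) :
    n * egalW n m v A ≤ utilW n m v A := by
  simpa [utilW] using sum_le_sum fun i (_ : i ∈ univ) => egalW_le_bundleVal v A i

lemma utilW_le_egalW [NeZero n] {v : Fin n → Fin m → ℝ} (hneg : ∀ i e, v i e ≤ 0)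
    (A : Fin n → Finset (Fin m)) : utilW n m v A ≤ egalW n m v A :=
  le_ciInf fun i => by
    rw [utilW, ← add_sum_erase _ _ (mem_univ i)]
    linarith [sum_nonpos fun l (_ : l ∈ univ.erase i) => bundleVal_nonpos (hneg l) (A l)]

lemma finite_welfare_values (W : (Fin n → Finset (Fin m)) → ℝ) :
    {x | ∃ A, ConnAlloc n m A ∧ x = W A}.Finite :=
  (Set.finite_range W).subset fun _ ⟨A, _, hx⟩ => ⟨A, hx.symm⟩

lemma egalW_le_optE (v : Fin n → Fin m → ℝ) {A : Fin n → Finset (Fin m)}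
    (hA : ConnAlloc n m A) : egalW n m v A ≤ optE n m v :=
  le_csSup (finite_welfare_values _).bddAbove ⟨A, hA, rfl⟩

lemma exists_egalW_eq_optE (v : Fin n → Fin m → ℝ) {A : Fin n → Finset (Fin m)}
    (hA : ConnAlloc n m A) : ∃ B, ConnAlloc n m B ∧ egalW n m v B = optE n m v := by
  have hne : {x | ∃ B, ConnAlloc n m B ∧ x = egalW n m v B}.Nonempty := ⟨_, A, hA, rfl⟩
  obtain ⟨B, hB, hx⟩ := hne.csSup_mem (finite_welfare_values _)
  exact ⟨B, hB, hx.symm⟩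

end Allocations

section TwoAgents

variable {m : ℕ} {v : Fin 2 → Fin m → ℝ} {A : Fin 2 → Finset (Fin m)} {i j : Fin 2}

lemma Fin.eq_or_eq_of_ne_two (hij : i ≠ j) (l : Fin 2) : l = i ∨ l = j := by omega

lemma iInf_fin_two_of_ne (f : Fin 2 → ℝ) (hij : i ≠ j) : ⨅ l, f l = min (f i) (f j) :=
  le_antisymm
    (le_min (ciInf_le (Finite.bddBelow_range f) i) (ciInf_le (Finite.bddBelow_range f) j))
    (le_ciInf fun l => by
      rcases Fin.eq_or_eq_of_ne_two hij l with rfl | rfl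
      exacts [min_le_left _ _, min_le_right _ _])

lemma egalW_two (hij : i ≠ j) :
    egalW 2 m v A = min (bundleVal (v i) (A i)) (bundleVal (v j) (A j)) :=
  iInf_fin_two_of_ne _ hij

lemma utilW_two (hij : i ≠ j) :
    utilW 2 m v A = bundleVal (v i) (A i) + bundleVal (v j) (A j) := by
  have huniv : (univ : Finset (Fin 2)) = {i, j} := by
    ext l; simpa using Fin.eq_or_eq_of_ne_two hij l
  rw [utilW, huniv, sum_pair hij]

lemma egalW_comp_swap (hij : i ≠ j) :
    egalW 2 m v (A ∘ Equiv.swap i j) = min (bundleVal (v i) (A j)) (bundleVal (v j) (A i)) := by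
  rw [egalW_two hij]
  simp

lemma ConnAlloc.bundleVal_add (hA : ConnAlloc 2 m A) (hij : i ≠ j) (w : Fin m → ℝ) :
    bundleVal w (A i) + bundleVal w (A j) = bundleVal w univ := by
  rw [bundleVal, bundleVal, ← sum_union (hA.2.1 i j hij)]
  congr 1
  refine eq_univ_of_forall fun e => ?_
  obtain ⟨l, hl⟩ := hA.2.2 e
  rcases Fin.eq_or_eq_of_ne_two hij l with rfl | rfl <;> simp [hl]

def cutAlloc (m k : ℕ) (i : Fin 2) : Fin 2 → Finset (Fin m) :=
  fun l => if l = i then prefixItems m k else suffixItems m k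

@[simp] lemma cutAlloc_self (k : ℕ) (i : Fin 2) : cutAlloc m k i i = prefixItems m k := if_pos rfl

lemma cutAlloc_of_ne (k : ℕ) (hij : i ≠ j) : cutAlloc m k i j = suffixItems m k :=
  if_neg hij.symm

lemma connAlloc_cutAlloc (k : ℕ) (i : Fin 2) : ConnAlloc 2 m (cutAlloc m k i) := by
  refine ⟨fun l => ?_, fun l l' hll' => ?_, fun e => ?_⟩
  · unfold cutAlloc; split_ifs
    exacts [isConnBundle_prefixItems k, isConnBundle_suffixItems k]
  · have hps : Disjoint (prefixItems m k) (suffixItems m k) :=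
      disjoint_left.2 fun e h1 h2 => by simp only [mem_prefixItems, mem_suffixItems] at h1 h2; omega
    unfold cutAlloc
    split_ifs <;> first | exact hps | exact hps.symm | omega
  · by_cases he : (e : ℕ) < k
    · exact ⟨i, by simpa using he⟩
    · obtain ⟨j, hji⟩ := exists_ne i
      exact ⟨j, by rw [cutAlloc_of_ne k hji.symm]; simpa using he⟩

lemma ConnAlloc.exists_eq_cutAlloc (hA : ConnAlloc 2 m A) (hm : 0 < m) :
    ∃ k ≤ m, ∃ i, A = cutAlloc m k i := by
  obtain ⟨hconn, hdisj, hcover⟩ := hA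
  obtain ⟨i, hi0⟩ := hcover ⟨0, hm⟩
  obtain ⟨j, hji⟩ := exists_ne i
  obtain ⟨k, hk, hAi⟩ : ∃ k ≤ m, A i = prefixItems m k :=
    exists_eq_prefixItems fun e d hde he => hconn i _ hi0 e he d (Fin.le_def.2 (Nat.zero_le _)) hde
  have hAj : ∀ e, e ∈ A j ↔ e ∉ A i := fun e => by
    obtain ⟨l, hl⟩ := hcover e
    refine ⟨fun he hi => disjoint_left.1 (hdisj i j hji.symm) hi he, fun hi => ?_⟩
    rcases Fin.eq_or_eq_of_ne_two hji.symm l with rfl | rfl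
    exacts [absurd hl hi, hl]
  refine ⟨k, hk, i, funext fun l => ?_⟩
  rcases Fin.eq_or_eq_of_ne_two hji.symm l with rfl | rfl
  · rw [cutAlloc_self, hAi]
  · ext e
    rw [cutAlloc_of_ne k hji.symm, hAj, hAi]
    simp

end TwoAgents

section Chores

variable {m k : ℕ} {v : Fin 2 → Fin m → ℝ} {A : Fin 2 → Finset (Fin m)} {i j : Fin 2}

lemma mmsVal_le_optE (hnorm : ∀ i, bundleVal (v i) univ = -1) (i : Fin 2) :
    mmsVal 2 m (v i) ≤ optE 2 m v := by
  obtain ⟨j, hji⟩ := exists_ne i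
  refine csSup_le ⟨_, cutAlloc m 0 i, connAlloc_cutAlloc 0 i, rfl⟩ ?_
  rintro _ ⟨B, hB, rfl⟩
  rw [iInf_fin_two_of_ne _ hji.symm]
  have hi := hB.bundleVal_add hji.symm (v i)
  have hj := hB.bundleVal_add hji.symm (v j)
  have hBopt := egalW_le_optE v hB
  have hswap := egalW_le_optE v (hB.comp_perm (Equiv.swap i j))
  rw [hnorm] at hi hj
  rw [egalW_two hji.symm] at hBopt
  rw [egalW_comp_swap hji.symm] at hswap
  have hhalf : min (bundleVal (v i) (B i)) (bundleVal (v i) (B j)) ≤ -(1 / 2) := by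
    linarith [min_le_left (bundleVal (v i) (B i)) (bundleVal (v i) (B j)),
      min_le_right (bundleVal (v i) (B i)) (bundleVal (v i) (B j))]
  -- one of the two bundles is worth at least `-1/2` to agent `j`; give agent `i` the other one
  rcases le_total (-(1 / 2)) (bundleVal (v j) (B j)) with h | h
  · exact (le_min (min_le_left _ _) (hhalf.trans h)).trans hBopt
  · exact (le_min (min_le_right _ _) (hhalf.trans (by linarith))).trans hswap

lemma neg_one_le_utilW (hnorm : ∀ i, bundleVal (v i) univ = -1) (hA : ConnAlloc 2 m A)
    (hopt : optE 2 m v ≤ egalW 2 m v A) : -1 ≤ utilW 2 m v A := by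
  have h01 : (0 : Fin 2) ≠ 1 := by decide
  have h0 := hA.bundleVal_add h01 (v 0)
  have h1 := hA.bundleVal_add h01 (v 1)
  have hswap := egalW_le_optE v (hA.comp_perm (Equiv.swap 0 1))
  rw [hnorm] at h0 h1
  rw [egalW_two h01, le_min_iff] at hopt
  rw [egalW_comp_swap h01, min_le_iff] at hswap
  rw [utilW_two h01]
  -- otherwise exchanging the two bundles would raise both agents above the optimum
  by_contra! hlt
  rcases hswap with h | h <;> linarith [hopt.1, hopt.2]

lemma optU_le_optE (hneg : ∀ i e, v i e ≤ 0) : optU 2 m v ≤ optE 2 m v :=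
  csSup_le ⟨_, cutAlloc m 0 0, connAlloc_cutAlloc 0 0, rfl⟩ fun _ ⟨B, hB, hx⟩ =>
    hx ▸ (utilW_le_egalW hneg B).trans (egalW_le_optE v hB)

lemma two_mul_optU_le_utilW (hneg : ∀ i e, v i e ≤ 0) (hopt : optE 2 m v ≤ egalW 2 m v A) :
    2 * optU 2 m v ≤ utilW 2 m v A := by
  have := mul_egalW_le_utilW v A
  push_cast at this
  linarith [optU_le_optE hneg]

lemma neg_one_sub_optE_le (hnorm : ∀ i, bundleVal (v i) univ = -1) (hA : ConnAlloc 2 m A)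
    (hij : i ≠ j) (hE : optE 2 m v ≤ -(1 / 2)) (h : bundleVal (v i) (A i) < -(1 / 2)) :
    -1 - optE 2 m v ≤ bundleVal (v j) (A j) := by
  have hi := hA.bundleVal_add hij (v i)
  have hj := hA.bundleVal_add hij (v j)
  have hswap := egalW_le_optE v (hA.comp_perm (Equiv.swap i j))
  rw [hnorm] at hi hj
  rw [egalW_comp_swap hij, min_le_iff] at hswap
  rcases hswap with h' | h' <;> linarith

lemma egalW_cutAlloc (hij : i ≠ j) :
    egalW 2 m v (cutAlloc m k i) =
      min (bundleVal (v i) (prefixItems m k)) (bundleVal (v j) (suffixItems m k)) := by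
  rw [egalW_two hij, cutAlloc_self, cutAlloc_of_ne k hij]

lemma optE_le_egalW_cutAlloc_pred (hneg : ∀ i e, v i e ≤ 0)
    (hnorm : ∀ i, bundleVal (v i) univ = -1) (hij : i ≠ j)
    (hk : optE 2 m v ≤ egalW 2 m v (cutAlloc m k i))
    (hbad : bundleVal (v i) (prefixItems m (k - 1)) < -(1 / 2)) :
    0 < k ∧ optE 2 m v ≤ egalW 2 m v (cutAlloc m (k - 1) i) ∧
      -(1 / 2) ≤ bundleVal (v j) (suffixItems m k) := by
  have hk0 : 0 < k := Nat.pos_of_ne_zero <| by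
    rintro rfl
    rw [Nat.zero_sub, prefixItems_zero, bundleVal_empty] at hbad
    norm_num at hbad
  rw [egalW_cutAlloc hij, le_min_iff] at hk ⊢
  have hf := bundleVal_le_of_subset (hneg i) (prefixItems_subset (m := m) (Nat.sub_le k 1))
  have hg := bundleVal_le_of_subset (hneg j) (suffixItems_subset (m := m) (Nat.sub_le k 1))
  have key := neg_one_sub_optE_le hnorm (connAlloc_cutAlloc (k - 1) i) hij (by linarith)
    (by rwa [cutAlloc_self])
  rw [cutAlloc_of_ne _ hij] at key
  exact ⟨hk0, ⟨by linarith, by linarith⟩, by linarith⟩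

lemma optE_le_egalW_cutAlloc_succ (hneg : ∀ i e, v i e ≤ 0)
    (hnorm : ∀ i, bundleVal (v i) univ = -1) (hij : i ≠ j)
    (hk : optE 2 m v ≤ egalW 2 m v (cutAlloc m k i))
    (hbad : bundleVal (v j) (suffixItems m (k + 1)) < -(1 / 2)) :
    k + 1 ≤ m ∧ optE 2 m v ≤ egalW 2 m v (cutAlloc m (k + 1) i) := by
  have hkm : k + 1 ≤ m := by
    by_contra! hmk
    rw [suffixItems_eq_empty hmk.le, bundleVal_empty] at hbad
    norm_num at hbad
  rw [egalW_cutAlloc hij, le_min_iff] at hk ⊢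
  have hf := bundleVal_le_of_subset (hneg i) (prefixItems_subset (m := m) (Nat.le_succ k))
  have hg := bundleVal_le_of_subset (hneg j) (suffixItems_subset (m := m) (Nat.le_succ k))
  have key := neg_one_sub_optE_le hnorm (connAlloc_cutAlloc (k + 1) i) hij.symm (by linarith)
    (by rwa [cutAlloc_of_ne _ hij])
  rw [cutAlloc_self] at key
  exact ⟨hkm, by linarith, by linarith⟩

/-- At `k = 0` and `k = m` the two bounds concern `prefixItems m (0 - 1) = ∅` and
`suffixItems m (m + 1) = ∅`, so they are vacuous there, matching an empty bundle in PROP1. -/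
lemma exists_optimal_cut_prop1 (hneg : ∀ i e, v i e ≤ 0)
    (hnorm : ∀ i, bundleVal (v i) univ = -1) (hij : i ≠ j) {k₀ : ℕ} (hk₀ : k₀ ≤ m)
    (hopt : optE 2 m v ≤ egalW 2 m v (cutAlloc m k₀ i)) :
    ∃ k ≤ m, optE 2 m v ≤ egalW 2 m v (cutAlloc m k i) ∧
      -(1 / 2) ≤ bundleVal (v i) (prefixItems m (k - 1)) ∧
      -(1 / 2) ≤ bundleVal (v j) (suffixItems m (k + 1)) := by
  classical
  set P : ℕ → Prop := fun k => optE 2 m v ≤ egalW 2 m v (cutAlloc m k i)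
  set K := Nat.findGreatest P m
  have hK : P K := Nat.findGreatest_spec hk₀ hopt
  have hKsuf : -(1 / 2) ≤ bundleVal (v j) (suffixItems m (K + 1)) := by
    by_contra! hbad
    obtain ⟨hKm, hK'⟩ := optE_le_egalW_cutAlloc_succ hneg hnorm hij hK hbad
    exact Nat.findGreatest_is_greatest (Nat.lt_succ_self K) hKm hK'
  have hex : ∃ k, P k ∧ -(1 / 2) ≤ bundleVal (v j) (suffixItems m (k + 1)) :=
    ⟨K, hK, hKsuf⟩
  obtain ⟨hopt', hsuf⟩ := Nat.find_spec hex
  refine ⟨Nat.find hex, (Nat.find_min' hex ⟨hK, hKsuf⟩).trans (Nat.findGreatest_le m),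
    hopt', ?_, hsuf⟩
  by_contra! hbad
  obtain ⟨hpos, hopt'', hsuf'⟩ := optE_le_egalW_cutAlloc_pred hneg hnorm hij hopt' hbad
  exact Nat.find_min hex (Nat.sub_lt hpos one_pos)
    ⟨hopt'', by rwa [Nat.sub_one_add_one hpos.ne']⟩

lemma prop1Chores_cutAlloc (hij : i ≠ j) (hk : k ≤ m)
    (hpre : -(1 / 2) ≤ bundleVal (v i) (prefixItems m (k - 1)))
    (hsuf : -(1 / 2) ≤ bundleVal (v j) (suffixItems m (k + 1))) :
    Prop1Chores 2 m v (cutAlloc m k i) := by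
  intro l
  rcases Fin.eq_or_eq_of_ne_two hij l with rfl | rfl
  · rw [cutAlloc_self]
    rcases Nat.eq_zero_or_pos k with rfl | hk0
    · exact Or.inl prefixItems_zero
    · refine Or.inr ⟨⟨k - 1, by omega⟩, by simp; omega, ?_⟩
      rw [prefixItems_sdiff_last hk0 hk]
      exact ⟨isConnBundle_prefixItems _, by norm_num; linarith⟩
  · rw [cutAlloc_of_ne k hij]
    rcases eq_or_lt_of_le hk with rfl | hkm
    · exact Or.inl (suffixItems_eq_empty le_rfl)
    · refine Or.inr ⟨⟨k, hkm⟩, by simp, ?_⟩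
      rw [suffixItems_sdiff_first hkm]
      exact ⟨isConnBundle_suffixItems _, by norm_num; linarith⟩

end Chores

/-- For every fair-chores instance with two agents, there exists a
connected allocation that is simultaneously MMS and PROP1, maximizes the egalitarian
welfare, and has utilitarian welfare at least `-1` and at least `2 · OPT_U`
(note `OPT_U ≤ 0`). -/
theorem chores_two_agents (m : ℕ) (v : Fin 2 → Fin m → ℝ)
    (hneg : ∀ i j, v i j ≤ 0)
    (hnorm : ∀ i, bundleVal (v i) Finset.univ = -1) :
    ∃ A : Fin 2 → Finset (Fin m), ConnAlloc 2 m A ∧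
      (∀ i, mmsVal 2 m (v i) ≤ bundleVal (v i) (A i)) ∧
      Prop1Chores 2 m v A ∧
      egalW 2 m v A = optE 2 m v ∧
      (-1 : ℝ) ≤ utilW 2 m v A ∧
      (2 : ℝ) * optU 2 m v ≤ utilW 2 m v A := by
  have hm : 0 < m := Nat.pos_of_ne_zero <| by
    rintro rfl
    simpa [bundleVal] using hnorm 0
  obtain ⟨A₀, hA₀, hA₀opt⟩ := exists_egalW_eq_optE v (connAlloc_cutAlloc (m := m) 0 0)
  obtain ⟨k₀, hk₀, i, rfl⟩ := hA₀.exists_eq_cutAlloc hm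
  obtain ⟨j, hji⟩ := exists_ne i
  obtain ⟨k, hk, hopt, hpre, hsuf⟩ :=
    exists_optimal_cut_prop1 hneg hnorm hji.symm hk₀ hA₀opt.ge
  have hA := connAlloc_cutAlloc (m := m) k i
  have hEW := le_antisymm (egalW_le_optE v hA) hopt
  refine ⟨cutAlloc m k i, hA, fun l => ?_, prop1Chores_cutAlloc hji.symm hk hpre hsuf, hEW,
    neg_one_le_utilW hnorm hA hopt, two_mul_optU_le_utilW hneg hopt⟩
  exact (mmsVal_le_optE hnorm l).trans (hEW ▸ egalW_le_bundleVal v _ l)
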